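/- arXiv:2308.05624 — 5 statements merged into one kernel-verified Lean document; each statement's English description precedes it below -/
import Mathlib

section
/- Let d ≥ 1 be an integer and let (b_1,…,b_r) be a nonempty list of integers with every b_i ≥ 2. Then the Hirzebruch–Jung continued fraction [b_1,…,b_r] equals 4d/(2d−1) if and only if either d = 1 and the list is (4), or d ≥ 2 and the list is (3,2,…,2,3) with exactly d−2 intermediate entries equal to 2. -/
/-!
For entries `≥ 2` every tail value lies in `(1, ∞)` (or is the empty value `0`), so
`hjcfZ (a :: l) = a - 1 / hjcfZ l` with `1 / hjcfZ l ∈ [0, 1)`. Hence the first entry is the ceiling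
of the value and the tail value is recovered from it, so `hjcfZ` is injective on such lists. The
theorem then reduces to evaluating `[4] = 4` and `[3, 2, …, 2, 3] = (4n + 8) / (2n + 3)`.
-/

/-- Hirzebruch–Jung continued fraction: `hjcf [b₁,…,b_r] = b₁ - 1/(b₂ - 1/(⋯ - 1/b_r))`.
(With the convention `hjcf [] = 0`, so that `hjcf [b] = b` since `1/0 = 0`.) -/
def hjcf : List ℚ → ℚ
  | [] => 0
  | b :: l => b - 1 / hjcf l

/-- Hirzebruch–Jung continued fraction of a list of integers. -/
def hjcfZ (b : List ℤ) : ℚ := hjcf (b.map (fun x => (x : ℚ)))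

lemma hjcfZ_nil : hjcfZ [] = 0 := rfl

lemma hjcfZ_cons (a : ℤ) (l : List ℤ) : hjcfZ (a :: l) = a - 1 / hjcfZ l := rfl

lemma one_div_hjcfZ_mem_Ico {l : List ℤ} (hl : ∀ x ∈ l, 2 ≤ x) :
    1 / hjcfZ l ∈ Set.Ico 0 1 := by
  induction l with
  | nil => simp [hjcfZ_nil]
  | cons a t ih =>
    obtain ⟨h0, h1⟩ := ih fun x hx => hl x (List.mem_cons_of_mem a hx)
    have ha : (2 : ℚ) ≤ a := by exact_mod_cast hl a List.mem_cons_self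
    have hgt : 1 < hjcfZ (a :: t) := by rw [hjcfZ_cons]; linarith
    exact ⟨by positivity, (div_lt_one (by linarith)).mpr hgt⟩

section Cons

variable {a : ℤ} {l : List ℤ}

lemma one_lt_hjcfZ_cons (h : ∀ x ∈ a :: l, 2 ≤ x) : 1 < hjcfZ (a :: l) := by
  have ha : (2 : ℚ) ≤ a := by exact_mod_cast h a List.mem_cons_self
  have hlt := (one_div_hjcfZ_mem_Ico fun x hx => h x (List.mem_cons_of_mem a hx)).2
  rw [hjcfZ_cons]
  linarith

lemma ceil_hjcfZ_cons (h : ∀ x ∈ a :: l, 2 ≤ x) : ⌈hjcfZ (a :: l)⌉ = a := by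
  obtain ⟨h0, h1⟩ := one_div_hjcfZ_mem_Ico fun x hx => h x (List.mem_cons_of_mem a hx)
  rw [Int.ceil_eq_iff, hjcfZ_cons]
  constructor <;> linarith

end Cons

theorem hjcfZ_injOn : Set.InjOn hjcfZ {l | ∀ x ∈ l, 2 ≤ x} := by
  intro l₁ h₁ l₂ h₂ heq
  induction l₁ generalizing l₂ with
  | nil =>
    cases l₂ with
    | nil => rfl
    | cons b s => linarith [one_lt_hjcfZ_cons h₂, hjcfZ_nil]
  | cons a t ih =>
    cases l₂ with
    | nil => linarith [one_lt_hjcfZ_cons h₁, hjcfZ_nil]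
    | cons b s =>
      have hab : a = b := by rw [← ceil_hjcfZ_cons h₁, heq, ceil_hjcfZ_cons h₂]
      subst hab
      have hts : hjcfZ t = hjcfZ s := by
        simpa only [hjcfZ_cons, sub_right_inj, one_div, inv_inj] using heq
      rw [ih (fun x hx => h₁ x (List.mem_cons_of_mem a hx))
        (fun x hx => h₂ x (List.mem_cons_of_mem a hx)) hts]

lemma hjcfZ_replicate_two_append_three (n : ℕ) :
    hjcfZ (List.replicate n 2 ++ [3]) = (2 * n + 3) / (2 * n + 1) := by
  induction n with
  | zero => norm_num [hjcfZ_cons, hjcfZ_nil]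
  | succ k ih =>
    rw [List.replicate_succ, List.cons_append, hjcfZ_cons, ih]
    have : (2 * k + 3 : ℚ) ≠ 0 := by positivity
    push_cast
    field_simp
    ring

lemma hjcfZ_three_cons_replicate_two_append_three (n : ℕ) :
    hjcfZ (3 :: (List.replicate n 2 ++ [3])) = (4 * n + 8) / (2 * n + 3) := by
  rw [hjcfZ_cons, hjcfZ_replicate_two_append_three]
  have : (2 * n + 3 : ℚ) ≠ 0 := by positivity
  push_cast
  field_simp
  ring

theorem stmt0_general (d : ℤ) (hd : 1 ≤ d) (b : List ℤ) (h2 : ∀ x ∈ b, 2 ≤ x) :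
    hjcfZ b = ((4 * d : ℤ) : ℚ) / ((2 * d - 1 : ℤ) : ℚ) ↔
      (d = 1 ∧ b = [4]) ∨
        (2 ≤ d ∧ b = 3 :: (List.replicate (d - 2).toNat 2 ++ [3])) := by
  rcases hd.eq_or_lt with rfl | hd2
  · have h4 : hjcfZ [4] = 4 := by norm_num [hjcfZ_cons, hjcfZ_nil]
    rw [← hjcfZ_injOn.eq_iff h2 (show ∀ x ∈ [(4 : ℤ)], 2 ≤ x by simp), h4]
    norm_num
  · obtain ⟨n, rfl⟩ : ∃ n : ℕ, d = n + 2 := ⟨(d - 2).toNat, by omega⟩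
    have hval : ((4 * (n + 2 : ℤ) : ℤ) : ℚ) / ((2 * (n + 2 : ℤ) - 1 : ℤ) : ℚ)
        = hjcfZ (3 :: (List.replicate n 2 ++ [3])) := by
      rw [hjcfZ_three_cons_replicate_two_append_three]
      push_cast
      ring_nf
    have hmem : ∀ x ∈ 3 :: (List.replicate n 2 ++ [3]), (2 : ℤ) ≤ x := by
      intro x hx
      simp only [List.mem_cons, List.mem_append, List.mem_replicate, List.not_mem_nil, or_false] at hx
      omega
    rw [hval, hjcfZ_injOn.eq_iff h2 hmem]
    simp only [add_sub_cancel_right, Int.toNat_natCast]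
    simp [show (n : ℤ) + 2 ≠ 1 by omega]

theorem stmt0 (d : ℤ) (hd : 1 ≤ d) (b : List ℤ) (hne : b ≠ []) (h2 : ∀ x ∈ b, 2 ≤ x) :
    hjcfZ b = ((4 * d : ℤ) : ℚ) / ((2 * d - 1 : ℤ) : ℚ) ↔
      (d = 1 ∧ b = [4]) ∨
        (2 ≤ d ∧ b = 3 :: (List.replicate (d - 2).toNat 2 ++ [3])) :=
  stmt0_general d hd b h2
end

section
/- Let (b_1,…,b_r) be a T-chain with Hirzebruch–Jung continued fraction dn²/(dna−1), where d ≥ 1 and 0 < a < n are coprime integers. Then every discrepancy vector (δ_1,…,δ_r) of (b_1,…,b_r) has the form δ_i = −1 + t_i/n where each t_i is an integer with 1 ≤ t_i ≤ n−1, and moreover t_1 + t_r = n (equivalently, δ_1 + δ_r = −1). -/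
/-- `δ` is a discrepancy vector for the chain `b`: it has the same length and satisfies the
adjunction equations `-bᵢ·δᵢ + δ_{i-1} + δ_{i+1} = bᵢ - 2` (0-indexed, with the convention that
the entries just outside the chain are 0). -/
def IsDiscrepancyVector (b : List ℤ) (δ : List ℚ) : Prop :=
  δ.length = b.length ∧
    ∀ i < b.length,
      -((b.getD i 0 : ℚ)) * δ.getD i 0
          + (if i = 0 then 0 else δ.getD (i - 1) 0) + δ.getD (i + 1) 0
        = (b.getD i 0 : ℚ) - 2

namespace HirzebruchJung

section Recurrence

variable {R : Type*} [CommRing R]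

def IsSolution (c : ℕ → R) (N : ℕ) (x : ℕ → R) : Prop :=
  ∀ j < N, x (j + 2) = c j * x (j + 1) - x j

namespace IsSolution

variable {c : ℕ → R} {N : ℕ} {x y : ℕ → R}

theorem add (hx : IsSolution c N x) (hy : IsSolution c N y) :
    IsSolution c N (fun j => x j + y j) := fun j hj => by
  dsimp only; rw [hx j hj, hy j hj]; ring

theorem const_mul (a : R) (hx : IsSolution c N x) : IsSolution c N (fun j => a * x j) :=
  fun j hj => by dsimp only; rw [hx j hj]; ring

theorem map {S : Type*} [CommRing S] (f : R →+* S) (hx : IsSolution c N x) :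
    IsSolution (fun j => f (c j)) N (fun j => f (x j)) := fun j hj => by
  dsimp only; rw [hx j hj, map_sub, map_mul]

theorem reflect {c' : ℕ → R} (hx : IsSolution c' N x) (hc : ∀ j < N, c' (N - 1 - j) = c j) :
    IsSolution c N (fun j => x (N + 1 - j)) := fun j hj => by
  have h := hx (N - 1 - j) (by omega)
  rw [hc j hj, show N - 1 - j + 2 = N + 1 - j by omega,
    show N - 1 - j + 1 = N + 1 - (j + 1) by omega] at h
  dsimp only
  rw [show N + 1 - (j + 2) = N - 1 - j by omega, h]
  ring

theorem casoratian (hx : IsSolution c N x) (hy : IsSolution c N y) :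
    ∀ j ≤ N, x (j + 1) * y j - x j * y (j + 1) = x 1 * y 0 - x 0 * y 1 := by
  intro j hj
  induction j with
  | zero => rfl
  | succ j ih =>
    rw [← ih (by omega), hx j (by omega), hy j (by omega)]
    ring

theorem dvd {m : R} (hx : IsSolution c N x) (h₀ : m ∣ x 0) (h₁ : m ∣ x 1) :
    ∀ j ≤ N + 1, m ∣ x j := by
  suffices ∀ j ≤ N, m ∣ x j ∧ m ∣ x (j + 1) from fun j hj =>
    if h : j ≤ N then (this j h).1 else by simpa [show j = N + 1 by omega] using (this N le_rfl).2
  intro j hj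
  induction j with
  | zero => exact ⟨h₀, h₁⟩
  | succ j ih =>
    obtain ⟨hj₀, hj₁⟩ := ih (by omega)
    exact ⟨hj₁, by rw [hx j (by omega)]; exact (hj₁.mul_left _).sub hj₀⟩

theorem unique (hx : IsSolution c N x) (hy : IsSolution c N y) (h₀ : x 0 = y 0)
    (h₁ : x 1 = y 1) : ∀ j ≤ N + 1, x j = y j := by
  have hxy : IsSolution c N (fun j => x j + (-1) * y j) := hx.add (hy.const_mul (-1))
  intro j hj
  have := hxy.dvd (m := 0) (by simp [h₀]) (by simp [h₁]) j hj
  rw [zero_dvd_iff] at this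
  linear_combination this

theorem unique_of_boundary [NoZeroDivisors R] {p : ℕ → R} (hx : IsSolution c N x)
    (hy : IsSolution c N y) (hp : IsSolution c N p) (hp₀ : p 0 = 0) (hp₁ : p 1 = 1)
    (hpN : p (N + 1) ≠ 0) (h₀ : x 0 = y 0) (hN : x (N + 1) = y (N + 1)) :
    ∀ j ≤ N + 1, x j = y j := by
  have h := hx.unique (hy.add (hp.const_mul (x 1 - y 1))) (by simp [h₀, hp₀]) (by simp [hp₁])
  have h₁ : (x 1 - y 1) * p (N + 1) = 0 := by linear_combination hN - h (N + 1) le_rfl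
  intro j hj
  rw [h j hj, (mul_eq_zero.mp h₁).resolve_right hpN, zero_mul, add_zero]

end IsSolution

theorem lt_of_convex {α : Type*} [AddCommGroup α] [LinearOrder α] [IsOrderedAddMonoid α]
    {f : ℕ → α} {N : ℕ}
    (hf : ∀ j, j + 2 ≤ N → f (j + 1) - f j ≤ f (j + 2) - f (j + 1))
    (h₁ : f 1 < f 0) (hN : f 0 ≤ f N) {j : ℕ} (hj₀ : 0 < j) (hjN : j < N) : f j < f N := by
  have mono : ∀ i k, i ≤ k → k < N → f (i + 1) - f i ≤ f (k + 1) - f k := by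
    intro i k hik hkN
    induction k, hik using Nat.le_induction with
    | base => exact le_rfl
    | succ k _ ih => exact (ih (by omega)).trans (hf k (by omega))
  obtain ⟨i, rfl⟩ : ∃ i, j = i + 1 := ⟨j - 1, by omega⟩
  rcases le_or_gt (f (i + 1) - f i) 0 with hi | hi
  · have : f (i + 1) - f 1 ≤ 0 := by
      rw [← Finset.sum_Ico_sub f (by omega)]
      exact Finset.sum_nonpos fun k hk =>
        (mono k i (by simp at hk; omega) (by omega)).trans hi
    calc f (i + 1) ≤ f 1 := sub_nonpos.mp this
      _ < f 0 := h₁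
      _ ≤ f N := hN
  · have : 0 < f N - f (i + 1) := by
      rw [← Finset.sum_Ico_sub f hjN.le]
      exact Finset.sum_pos (fun k hk => hi.trans_le (mono i k (by simp at hk; omega)
        (by simp at hk; omega))) ⟨i + 1, by simp [hjN]⟩
    exact sub_pos.mp this

end Recurrence

section Continuant

-- `continuant l (j + 1)` is the continuant of the first `j` entries of `l`.
def continuant (l : List ℤ) : ℕ → ℤ
  | 0 => 0
  | 1 => 1
  | j + 2 => l.getD j 0 * continuant l (j + 1) - continuant l j

variable (l : List ℤ)

theorem isSolution_continuant (N : ℕ) : IsSolution (fun j => l.getD j 0) N (continuant l) :=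
  fun _ _ => rfl

theorem isSolution_continuant_reverse :
    IsSolution (fun j => l.getD j 0) l.length
      (fun j => continuant l.reverse (l.length + 1 - j)) :=
  (isSolution_continuant l.reverse l.length).reflect fun j hj => by
    rw [List.getD_reverse _ (by omega), show l.length - 1 - (l.length - 1 - j) = j by omega]

theorem continuant_append (t : List ℤ) :
    ∀ j ≤ l.length + 1, continuant (l ++ t) j = continuant l j := by
  refine IsSolution.unique (c := fun j => l.getD j 0) (fun j hj => ?_)
    (isSolution_continuant l _) rfl rfl
  show (l ++ t).getD j 0 * _ - _ = _
  rw [List.getD_append _ _ _ _ hj]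

theorem isCoprime_continuant_succ (j : ℕ) :
    IsCoprime (continuant l (j + 1)) (continuant l j) := by
  induction j with
  | zero => exact isCoprime_one_left
  | succ j ih =>
    show IsCoprime (l.getD j 0 * continuant l (j + 1) - continuant l j) _
    simpa [sub_eq_neg_add, mul_comm] using ih.symm.neg_left.add_mul_left_left (l.getD j 0)

variable {l}

theorem two_le_getD (h2 : ∀ x ∈ l, 2 ≤ x) {j : ℕ} (hj : j < l.length) :
    2 ≤ l.getD j 0 := by
  rw [List.getD_eq_getElem _ _ hj]
  exact h2 _ (List.getElem_mem hj)

theorem continuant_bounds (h2 : ∀ x ∈ l, 2 ≤ x) :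
    ∀ j ≤ l.length, (j : ℤ) ≤ continuant l j ∧ continuant l j < continuant l (j + 1) := by
  intro j hj
  induction j with
  | zero => simp [continuant]
  | succ j ih =>
    obtain ⟨hj₀, hj₁⟩ := ih (by omega)
    have hb := two_le_getD h2 (show j < l.length by omega)
    refine ⟨by push_cast; omega, ?_⟩
    show _ < l.getD j 0 * continuant l (j + 1) - continuant l j
    nlinarith

theorem continuant_length_succ_pos (h2 : ∀ x ∈ l, 2 ≤ x) :
    0 < continuant l (l.length + 1) := by
  have := continuant_bounds h2 l.length le_rfl
  omega

theorem continuant_length_succ_reverse :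
    continuant l (l.length + 1) = continuant l.reverse (l.length + 1) := by
  have h := (isSolution_continuant l l.length).casoratian (isSolution_continuant_reverse l)
    l.length le_rfl
  simpa [continuant] using h

theorem hjcfZ_eq_continuant_div (h2 : ∀ x ∈ l, 2 ≤ x) :
    hjcfZ l = continuant l.reverse (l.length + 1) / continuant l.reverse l.length := by
  induction l with
  | nil => simp [hjcfZ, hjcf, continuant]
  | cons x l ih =>
    have h2l : ∀ y ∈ l, 2 ≤ y := fun y hy => h2 y (List.mem_cons_of_mem _ hy)
    have hpos : (0 : ℚ) < continuant l.reverse (l.length + 1) := by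
      have := continuant_length_succ_pos (l := l.reverse) (by simpa using h2l)
      simp only [List.length_reverse] at this
      exact_mod_cast this
    have hrev : (x :: l).reverse = l.reverse ++ [x] := List.reverse_cons
    have hlen : l.reverse.length = l.length := List.length_reverse
    have e₁ : continuant (x :: l).reverse (l.length + 1)
        = continuant l.reverse (l.length + 1) := by
      rw [hrev]
      exact continuant_append _ _ _ (by omega)
    have e₂ : continuant (x :: l).reverse (l.length + 2)
        = x * continuant l.reverse (l.length + 1) - continuant l.reverse l.length := by
      rw [hrev]
      show (l.reverse ++ [x]).getD l.length 0 * _ - _ = _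
      rw [List.getD_append_right _ _ _ _ (by omega), hlen, Nat.sub_self,
        continuant_append _ _ _ (by omega), continuant_append _ _ _ (by omega)]
      rfl
    show (x : ℚ) - 1 / hjcfZ l = _
    rw [ih h2l, List.length_cons, e₂, e₁, one_div_div]
    field_simp
    push_cast
    ring

theorem dvd_continuant_reverse_sub (l : List ℤ) :
    ∀ j ≤ l.length + 1, continuant l.reverse (l.length + 1) ∣
      continuant l.reverse (l.length + 1 - j) - continuant l.reverse l.length * continuant l j := by
  intro j hj
  have := ((isSolution_continuant_reverse l).add
    ((isSolution_continuant l _).const_mul (-continuant l.reverse l.length))).dvd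
    (m := continuant l.reverse (l.length + 1)) (by simp [continuant]) (by simp [continuant]) j hj
  rwa [neg_mul, ← sub_eq_add_neg] at this

end Continuant

section LogDiscrepancy

-- `continuant l (l.length + 1)` times the log discrepancy `1 + δ_j`.
def logDiscrepancyNum (l : List ℤ) (j : ℕ) : ℤ :=
  continuant l j + continuant l.reverse (l.length + 1 - j)

variable (l : List ℤ)

theorem isSolution_logDiscrepancyNum :
    IsSolution (fun j => l.getD j 0) l.length (logDiscrepancyNum l) :=
  (isSolution_continuant l _).add (isSolution_continuant_reverse l)

theorem logDiscrepancyNum_zero :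
    logDiscrepancyNum l 0 = continuant l.reverse (l.length + 1) := by
  simp [logDiscrepancyNum, continuant]

theorem logDiscrepancyNum_one :
    logDiscrepancyNum l 1 = 1 + continuant l.reverse l.length := by
  simp [logDiscrepancyNum, continuant]

theorem logDiscrepancyNum_length_succ :
    logDiscrepancyNum l (l.length + 1) = continuant l.reverse (l.length + 1) := by
  simp [logDiscrepancyNum, continuant, continuant_length_succ_reverse]

variable {l}

theorem logDiscrepancyNum_pos (h2 : ∀ x ∈ l, 2 ≤ x) {j : ℕ} (hj₀ : 0 < j)
    (hj : j ≤ l.length) : 0 < logDiscrepancyNum l j := by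
  have hp := (continuant_bounds h2 j hj).1
  have hq := (continuant_bounds (l := l.reverse) (by simpa using h2) (l.length + 1 - j)
    (by simp; omega)).1
  rw [logDiscrepancyNum]
  omega

-- The sequence is convex where it is positive, so it stays below its boundary values.
theorem logDiscrepancyNum_lt (h2 : ∀ x ∈ l, 2 ≤ x)
    (h : continuant l.reverse l.length + 1 < continuant l.reverse (l.length + 1))
    {j : ℕ} (hj₀ : 0 < j) (hj : j ≤ l.length) :
    logDiscrepancyNum l j < continuant l.reverse (l.length + 1) := by
  rw [← logDiscrepancyNum_length_succ]
  refine lt_of_convex (fun i hi => ?_) ?_ ?_ hj₀ (by omega)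
  · have hpos := logDiscrepancyNum_pos h2 (j := i + 1) (by omega) (by omega)
    have hb := two_le_getD h2 (j := i) (by omega)
    rw [isSolution_logDiscrepancyNum l i (by omega)]
    nlinarith
  · rwa [logDiscrepancyNum_one, logDiscrepancyNum_zero, add_comm]
  · rw [logDiscrepancyNum_zero, logDiscrepancyNum_length_succ]

end LogDiscrepancy

end HirzebruchJung

open HirzebruchJung

-- `(0 :: δ).getD j 0` is `δ_j` in the 1-based indexing of the paper, with `δ_0 = δ_{r+1} = 0`.
theorem IsDiscrepancyVector.isSolution {b : List ℤ} {δ : List ℚ}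
    (hδ : IsDiscrepancyVector b δ) :
    IsSolution (fun j => (b.getD j 0 : ℚ)) b.length (fun j => 1 + (0 :: δ).getD j 0) := by
  intro j hj
  have h := hδ.2 j hj
  have e : (if j = 0 then 0 else δ.getD (j - 1) 0) = (0 :: δ).getD j 0 := by
    cases j <;> simp
  rw [e] at h
  show 1 + δ.getD (j + 1) 0 = _ * (1 + δ.getD j 0) - (1 + (0 :: δ).getD j 0)
  linear_combination h

theorem IsDiscrepancyVector.continuant_mul_logDiscrepancy {b : List ℤ} {δ : List ℚ}
    (hδ : IsDiscrepancyVector b δ) (h2 : ∀ x ∈ b, 2 ≤ x) :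
    ∀ j ≤ b.length + 1,
      (continuant b (b.length + 1) : ℚ) * (1 + (0 :: δ).getD j 0) = logDiscrepancyNum b j := by
  have hp := (isSolution_continuant b b.length).map (Int.castRingHom ℚ)
  have hS := (isSolution_logDiscrepancyNum b).map (Int.castRingHom ℚ)
  refine (hδ.isSolution.const_mul _).unique_of_boundary hS hp rfl rfl ?_ ?_ ?_
  · simpa using (continuant_length_succ_pos h2).ne'
  · simp [logDiscrepancyNum_zero, continuant_length_succ_reverse]
  · simp [List.getElem?_eq_none hδ.1.le, logDiscrepancyNum_length_succ,
      continuant_length_succ_reverse]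

section TChain

variable {d n a : ℤ} {b : List ℤ}

theorem tChain_continuant_reverse (hd : 1 ≤ d) (ha : 0 < a) (han : a < n)
    (h2 : ∀ x ∈ b, 2 ≤ x)
    (hcf : hjcfZ b = ((d * n ^ 2 : ℤ) : ℚ) / ((d * n * a - 1 : ℤ) : ℚ)) :
    continuant b.reverse (b.length + 1) = d * n ^ 2 ∧
      continuant b.reverse b.length = d * n * a - 1 := by
  have hn : 0 < n := by omega
  have hdn : 1 < d * n := by nlinarith
  have hk : 0 < d * n * a - 1 := by nlinarith
  have hm : 0 < d * n ^ 2 := by positivity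
  have hb : b ≠ [] := by
    rintro rfl
    exact div_ne_zero (by exact_mod_cast hm.ne') (by exact_mod_cast hk.ne') hcf.symm
  have hq : 0 < continuant b.reverse b.length := by
    have := (continuant_bounds (l := b.reverse) (by simpa using h2) b.length (by simp)).1
    have := List.length_pos_of_ne_nil hb
    omega
  have hcop : IsCoprime (d * n ^ 2) (d * n * a - 1) := ⟨d * a ^ 2, -(d * n * a + 1), by ring⟩
  rw [hjcfZ_eq_continuant_div h2] at hcf
  exact Rat.div_int_inj hq hk
    (Int.isCoprime_iff_gcd_eq_one.mp (isCoprime_continuant_succ b.reverse b.length))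
    (Int.isCoprime_iff_gcd_eq_one.mp hcop) hcf

theorem tChain_dvd_logDiscrepancyNum (hm : continuant b.reverse (b.length + 1) = d * n ^ 2)
    (hk : continuant b.reverse b.length = d * n * a - 1) :
    ∀ j ≤ b.length + 1, d * n ∣ logDiscrepancyNum b j := by
  intro j hj
  have h := dvd_continuant_reverse_sub b j hj
  rw [hm, hk] at h
  have : logDiscrepancyNum b j = (continuant b.reverse (b.length + 1 - j)
      - (d * n * a - 1) * continuant b j) + d * n * (a * continuant b j) := by
    rw [logDiscrepancyNum]; ring
  rw [this]
  exact dvd_add ((Dvd.intro n (by ring)).trans h) (dvd_mul_right _ _)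

theorem tChain_logDiscrepancyNum_div_bounds (hdn : 0 < d * n) (han : a < n)
    (h2 : ∀ x ∈ b, 2 ≤ x) (hm : continuant b.reverse (b.length + 1) = d * n ^ 2)
    (hk : continuant b.reverse b.length = d * n * a - 1) {j : ℕ} (hj₀ : 0 < j)
    (hj : j ≤ b.length) :
    1 ≤ logDiscrepancyNum b j / (d * n) ∧ logDiscrepancyNum b j / (d * n) ≤ n - 1 := by
  have hpos := logDiscrepancyNum_pos h2 hj₀ hj
  have hlt := logDiscrepancyNum_lt h2 (by rw [hm, hk]; nlinarith) hj₀ hj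
  rw [hm, ← Int.mul_ediv_cancel' (tChain_dvd_logDiscrepancyNum hm hk j (by omega))] at hlt
  rw [← Int.mul_ediv_cancel' (tChain_dvd_logDiscrepancyNum hm hk j (by omega))] at hpos
  constructor <;> nlinarith

theorem tChain_logDiscrepancyNum_one_div (hdn : d * n ≠ 0)
    (hk : continuant b.reverse b.length = d * n * a - 1) :
    logDiscrepancyNum b 1 / (d * n) = a := by
  rw [logDiscrepancyNum_one, hk, add_sub_cancel, Int.mul_ediv_cancel_left _ hdn]

theorem tChain_dvd_logDiscrepancyNum_length_div_add (hdn : d * n ≠ 0)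
    (hm : continuant b.reverse (b.length + 1) = d * n ^ 2)
    (hk : continuant b.reverse b.length = d * n * a - 1) :
    n ∣ logDiscrepancyNum b b.length / (d * n) + a := by
  set t := logDiscrepancyNum b b.length / (d * n)
  have ht : continuant b b.length + 1 = d * n * t := by
    rw [Int.mul_ediv_cancel' (tChain_dvd_logDiscrepancyNum hm hk _ (by omega)),
      logDiscrepancyNum, Nat.add_sub_cancel_left]
    rfl
  have h := dvd_continuant_reverse_sub b b.length (by omega)
  rw [hm, hk, Nat.add_sub_cancel_left, show continuant b.reverse 1 = 1 from rfl,
    show continuant b b.length = d * n * t - 1 by omega] at h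
  rw [← mul_dvd_mul_iff_left hdn]
  have : d * n * (t + a) = (1 - (d * n * a - 1) * (d * n * t - 1)) + d * n ^ 2 * (d * a * t) := by
    ring
  rw [this, show d * n * n = d * n ^ 2 by ring]
  exact dvd_add h (dvd_mul_right _ _)

theorem tChain_logDiscrepancyNum_div_one_add_length (hdn : 0 < d * n) (ha : 0 < a)
    (han : a < n) (h2 : ∀ x ∈ b, 2 ≤ x) (hr : 0 < b.length)
    (hm : continuant b.reverse (b.length + 1) = d * n ^ 2)
    (hk : continuant b.reverse b.length = d * n * a - 1) :
    logDiscrepancyNum b 1 / (d * n) + logDiscrepancyNum b b.length / (d * n) = n := by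
  obtain ⟨k, hk'⟩ := tChain_dvd_logDiscrepancyNum_length_div_add hdn.ne' hm hk
  have htr := tChain_logDiscrepancyNum_div_bounds hdn han h2 hm hk hr le_rfl
  have hk₀ : 0 < k := pos_of_mul_pos_right (by omega : 0 < n * k) (by omega)
  have hk₂ : k < 2 := lt_of_mul_lt_mul_left (by omega : n * k < n * 2) (by omega)
  obtain rfl : k = 1 := by omega
  rw [tChain_logDiscrepancyNum_one_div hdn.ne' hk]
  omega

theorem IsDiscrepancyVector.eq_tChain {δ : List ℚ} (hδ : IsDiscrepancyVector b δ)
    (hdn : 0 < d * n) (h2 : ∀ x ∈ b, 2 ≤ x)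
    (hm : continuant b.reverse (b.length + 1) = d * n ^ 2)
    (hk : continuant b.reverse b.length = d * n * a - 1) {i : ℕ} (hi : i < b.length) :
    δ.getD i 0 = -1 + ((logDiscrepancyNum b (i + 1) / (d * n) : ℤ) : ℚ) / n := by
  have h := hδ.continuant_mul_logDiscrepancy h2 (i + 1) (by omega)
  rw [continuant_length_succ_reverse, hm,
    ← Int.mul_ediv_cancel' (tChain_dvd_logDiscrepancyNum hm hk (i + 1) (by omega))] at h
  simp only [List.getD_cons_succ] at h
  push_cast at h
  have hdn' : (d : ℚ) * n ≠ 0 := by exact_mod_cast hdn.ne'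
  have hn : (n : ℚ) * (1 + δ.getD i 0) = (logDiscrepancyNum b (i + 1) / (d * n) : ℤ) :=
    mul_left_cancel₀ hdn' (by linear_combination h)
  rw [← hn]
  field_simp [right_ne_zero_of_mul hdn']
  ring

end TChain

theorem stmt4_general (d n a : ℤ) (hd : 1 ≤ d) (ha : 0 < a) (han : a < n)
    (b : List ℤ) (h2 : ∀ x ∈ b, 2 ≤ x)
    (hcf : hjcfZ b = ((d * n ^ 2 : ℤ) : ℚ) / ((d * n * a - 1 : ℤ) : ℚ))
    (δ : List ℚ) (hδ : IsDiscrepancyVector b δ) :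
    ∃ t : List ℤ, t.length = b.length ∧
      (∀ i < t.length,
        δ.getD i 0 = -1 + (t.getD i 0 : ℚ) / (n : ℚ) ∧
          1 ≤ t.getD i 0 ∧ t.getD i 0 ≤ n - 1) ∧
      t.getD 0 0 + t.getD (t.length - 1) 0 = n := by
  obtain ⟨hm, hk⟩ := tChain_continuant_reverse hd ha han h2 hcf
  have hdn : 0 < d * n := by nlinarith
  have hr : 0 < b.length := Nat.pos_of_ne_zero fun h => by
    simp only [h, continuant] at hk
    nlinarith
  refine ⟨(List.range b.length).map fun i => logDiscrepancyNum b (i + 1) / (d * n),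
    by simp, fun i hi => ?_, ?_⟩
  · simp only [List.length_map, List.length_range] at hi
    simp only [hi, List.getD_eq_getElem?_getD, List.getElem?_map, List.getElem?_range,
      Option.map_some, Option.getD_some]
    exact ⟨hδ.eq_tChain hdn h2 hm hk hi,
      tChain_logDiscrepancyNum_div_bounds hdn han h2 hm hk (by omega) (by omega)⟩
  · simpa [hr, Nat.sub_add_cancel hr] using
      tChain_logDiscrepancyNum_div_one_add_length hdn ha han h2 hr hm hk

theorem stmt4 (d n a : ℤ) (hd : 1 ≤ d) (ha : 0 < a) (han : a < n)
    (hgcd : Int.gcd a n = 1)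
    (b : List ℤ) (h2 : ∀ x ∈ b, 2 ≤ x)
    (hcf : hjcfZ b = ((d * n ^ 2 : ℤ) : ℚ) / ((d * n * a - 1 : ℤ) : ℚ))
    (δ : List ℚ) (hδ : IsDiscrepancyVector b δ) :
    ∃ t : List ℤ, t.length = b.length ∧
      (∀ i < t.length,
        δ.getD i 0 = -1 + (t.getD i 0 : ℚ) / (n : ℚ) ∧
          1 ≤ t.getD i 0 ∧ t.getD i 0 ≤ n - 1) ∧
      t.getD 0 0 + t.getD (t.length - 1) 0 = n :=
  stmt4_general d n a hd ha han b h2 hcf δ hδ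
end

section
/- Let (b_1,…,b_r) be a T-chain with Hirzebruch–Jung continued fraction dn²/(dna−1) (d ≥ 1, 0 < a < n coprime) and suppose (−1 + t_1/n, …, −1 + t_r/n) is a discrepancy vector for it, where the t_i are integers with t_1 + t_r = n. Then the tuple (−1 + t_1/(n+t_1), −1 + t_2/(n+t_1), …, −1 + t_r/(n+t_1), −1 + (t_1+t_r)/(n+t_1)) is a discrepancy vector for the T-chain (b_1+1, b_2,…,b_r, 2), and the tuple (−1 + (t_1+t_r)/(n+t_r), −1 + t_1/(n+t_r), …, −1 + t_r/(n+t_r)) is a discrepancy vector for the T-chain (2, b_1,…,b_{r−1}, b_r+1). -/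
/-- The operation `(b₁,…,b_r) ↦ (b₁+1, b₂,…,b_r, 2)`. -/
def addLeft (b : List ℤ) : List ℤ := b.modifyHead (· + 1) ++ [2]

/-- The operation `(b₁,…,b_r) ↦ (2, b₁,…,b_{r-1}, b_r+1)`. -/
def addRight (b : List ℤ) : List ℤ := 2 :: (b.reverse.modifyHead (· + 1)).reverse

/-!
Substituting `δᵢ = -1 + tᵢ / m`, the adjunction equations for `(b₁,…,b_r)` become the linear
recurrence `bᵢ tᵢ = tᵢ₋₁ + tᵢ₊₁` with boundary values `t₀ = t_{r+1} = m`. For the chain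
`(b₁+1, b₂,…,b_r, 2)` and `m = n + t₁`, the sequence `(t₁,…,t_r, n)` satisfies this recurrence:
the first equation gains `t₁` on both sides, and the equations at positions `r` and `r + 1` are
`t₁ + t_r = n` in disguise. The new denominator `n + t₁` is nonzero since `bᵢ ≥ 2` forces all
`tᵢ > 0` by a discrete minimum principle. The claim for `(2, b₁,…,b_r+1)` is the first claim
for the reversed chain.
-/

section withBoundary

variable {α : Type*}

/-- Index `k` is the paper's index `k`; positions `0` and `r + 1` (and beyond) carry `c`. -/
def withBoundary (c : α) (l : List α) (k : ℕ) : α := (c :: l ++ [c]).getD k c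

@[simp] theorem withBoundary_zero (c : α) (l : List α) : withBoundary c l 0 = c := rfl

theorem withBoundary_succ (c : α) (l : List α) (k : ℕ) :
    withBoundary c l (k + 1) = l.getD k c := by
  unfold withBoundary; grind

theorem withBoundary_succ_of_lt (c : α) (l : List α) {k : ℕ} (hk : k < l.length) (d : α) :
    withBoundary c l (k + 1) = l.getD k d := by
  rw [withBoundary_succ, List.getD_eq_getElem _ _ hk, List.getD_eq_getElem _ _ hk]

@[simp] theorem withBoundary_length_succ (c : α) (l : List α) :
    withBoundary c l (l.length + 1) = c := by
  rw [withBoundary_succ, List.getD_eq_default _ _ le_rfl]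

theorem withBoundary_map {β : Type*} (f : α → β) (c : α) (l : List α) (k : ℕ) :
    withBoundary (f c) (l.map f) k = f (withBoundary c l k) := by
  simpa [withBoundary] using List.getD_map (c :: l ++ [c]) c f (n := k)

theorem withBoundary_append_singleton (c c' : α) (l : List α) {k : ℕ} (hk0 : k ≠ 0)
    (hk : k ≤ l.length + 1) : withBoundary c' (l ++ [c]) k = withBoundary c l k := by
  obtain ⟨j, rfl⟩ := Nat.exists_eq_succ_of_ne_zero hk0
  simp only [withBoundary_succ]; grind

theorem withBoundary_reverse (c : α) (l : List α) {k : ℕ} (hk : k ≤ l.length + 1) :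
    withBoundary c l.reverse k = withBoundary c l (l.length + 1 - k) := by
  have hrev : c :: l.reverse ++ [c] = (c :: l ++ [c]).reverse := by simp
  rw [withBoundary, hrev, List.getD_reverse _ (by simp; omega)]
  congr 1
  simp only [List.length_append, List.length_cons, List.length_nil]
  omega

end withBoundary

theorem length_pos_of_getD_add_getD_ne_zero {t : List ℚ}
    (h : t.getD 0 0 + t.getD (t.length - 1) 0 ≠ 0) : 0 < t.length := by
  cases t with
  | nil => simp at h
  | cons x l => simp

theorem isDiscrepancyVector_iff (b : List ℤ) (δ : List ℚ) :
    IsDiscrepancyVector b δ ↔ δ.length = b.length ∧ ∀ i < b.length,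
      -(b.getD i 0 : ℚ) * withBoundary 0 δ (i + 1) + withBoundary 0 δ i
        + withBoundary 0 δ (i + 2) = b.getD i 0 - 2 := by
  have hprev (i : ℕ) : withBoundary 0 δ i = if i = 0 then 0 else δ.getD (i - 1) 0 := by
    cases i <;> simp [withBoundary_succ]
  have hnext (i : ℕ) : withBoundary 0 δ (i + 2) = δ.getD (i + 1) 0 := withBoundary_succ 0 δ (i + 1)
  simp only [IsDiscrepancyVector, hnext, withBoundary_succ]
  simp only [hprev]

theorem IsDiscrepancyVector.reverse {b : List ℤ} {δ : List ℚ} (h : IsDiscrepancyVector b δ) :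
    IsDiscrepancyVector b.reverse δ.reverse := by
  rw [isDiscrepancyVector_iff] at h ⊢
  obtain ⟨hlen, heq⟩ := h
  refine ⟨by simp [hlen], fun i hi => ?_⟩
  rw [List.length_reverse] at hi
  have := heq (b.length - 1 - i) (by omega)
  rw [List.getD_reverse _ hi, withBoundary_reverse _ _ (by omega),
    withBoundary_reverse _ _ (by omega), withBoundary_reverse _ _ (by omega)]
  rw [show δ.length + 1 - (i + 1) = b.length - 1 - i + 1 by omega,
    show δ.length + 1 - i = b.length - 1 - i + 2 by omega,
    show δ.length + 1 - (i + 2) = b.length - 1 - i by omega]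
  linarith

def SolvesChain (b : List ℤ) (v : ℕ → ℚ) : Prop :=
  ∀ i < b.length, (b.getD i 0 : ℚ) * v (i + 1) = v i + v (i + 2)

theorem isDiscrepancyVector_map_iff_solvesChain {b : List ℤ} {t : List ℚ} {m : ℚ} (hm : m ≠ 0)
    (hlen : t.length = b.length) :
    IsDiscrepancyVector b (t.map fun x => -1 + x / m) ↔ SolvesChain b (withBoundary m t) := by
  have hpad (k : ℕ) : withBoundary 0 (t.map fun x => -1 + x / m) k = -1 + withBoundary m t k / m := by
    simpa [div_self hm] using withBoundary_map (fun x => -1 + x / m) m t k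
  simp only [isDiscrepancyVector_iff, hpad, List.length_map, hlen, true_and, SolvesChain]
  refine forall₂_congr fun i _ => ?_
  constructor <;> intro h
  · field_simp at h; linarith
  · field_simp; linarith

theorem SolvesChain.pos {b : List ℤ} {v : ℕ → ℚ} (h : SolvesChain b v) (hb : ∀ x ∈ b, 2 ≤ x)
    (h0 : 0 < v 0) (hlast : 0 < v (b.length + 1)) {k : ℕ} (hk : k ≤ b.length + 1) : 0 < v k := by
  have hmin : ∃ j, j ≤ b.length + 1 ∧ ∀ i ≤ b.length + 1, v j ≤ v i := by
    obtain ⟨j, hj, hjmin⟩ := (Finset.range (b.length + 2)).exists_min_image v ⟨0, by simp⟩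
    exact ⟨j, by simpa [Nat.lt_succ_iff] using hj,
      fun i hi => hjmin i (by simpa [Nat.lt_succ_iff] using hi)⟩
  -- At the leftmost minimiser `j`, `v (j-1) + v (j+1) > 2 v j ≥ b v j` unless `v j > 0`.
  obtain ⟨j, ⟨hj, hjmin⟩, hleftmost⟩ : ∃ j, (j ≤ b.length + 1 ∧ ∀ i ≤ b.length + 1, v j ≤ v i) ∧
      ∀ i < j, ¬ (i ≤ b.length + 1 ∧ ∀ l ≤ b.length + 1, v i ≤ v l) :=
    ⟨Nat.find hmin, Nat.find_spec hmin, fun _ => Nat.find_min hmin⟩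
  refine lt_of_lt_of_le ?_ (hjmin k hk)
  by_contra! hvj
  have hj0 : j ≠ 0 := fun h => by rw [h] at hvj; linarith
  have hjr : j ≠ b.length + 1 := fun h => by rw [h] at hvj; linarith
  obtain ⟨i, rfl⟩ := Nat.exists_eq_succ_of_ne_zero hj0
  have hleft : v (i + 1) < v i := by
    have := hleftmost i (by omega)
    push Not at this
    obtain ⟨l, hl, hlt⟩ := this (by omega)
    exact (hjmin l hl).trans_lt hlt
  have hright := hjmin (i + 2) (by omega)
  have hrec := h i (by omega)
  have hbi : (2 : ℚ) ≤ b.getD i 0 := by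
    rw [List.getD_eq_getElem _ _ (by omega)]
    exact_mod_cast hb _ (List.getElem_mem _)
  nlinarith

@[simp] theorem length_addLeft (b : List ℤ) : (addLeft b).length = b.length + 1 := by
  simp [addLeft]

theorem addLeft_getD_zero {b : List ℤ} (hb : b ≠ []) : (addLeft b).getD 0 0 = b.getD 0 0 + 1 := by
  cases b with
  | nil => exact absurd rfl hb
  | cons x l => simp [addLeft]

theorem addLeft_getD_of_pos {b : List ℤ} {i : ℕ} (hi0 : i ≠ 0) (hi : i < b.length) :
    (addLeft b).getD i 0 = b.getD i 0 := by
  cases b with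
  | nil => simp at hi
  | cons x l =>
    obtain ⟨j, rfl⟩ := Nat.exists_eq_succ_of_ne_zero hi0
    simp only [addLeft, List.modifyHead_cons, List.cons_append, List.getD_cons_succ]
    exact List.getD_append _ _ _ _ (by simpa using hi)

theorem addLeft_getD_length (b : List ℤ) : (addLeft b).getD b.length 0 = 2 := by
  simp [addLeft]

theorem addRight_eq_reverse_addLeft_reverse (b : List ℤ) :
    addRight b = (addLeft b.reverse).reverse := by
  simp [addLeft, addRight]

theorem SolvesChain.addLeft {b : List ℤ} {t : List ℚ} {n : ℚ} (hb : b ≠ [])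
    (hlen : t.length = b.length) (h : SolvesChain b (withBoundary n t))
    (hsum : t.getD 0 0 + t.getD (t.length - 1) 0 = n) :
    SolvesChain (addLeft b) (withBoundary (n + t.getD 0 0) (t ++ [n])) := by
  have hr : 0 < b.length := List.length_pos_iff.mpr hb
  have hagree {k : ℕ} (hk0 : k ≠ 0) (hk : k ≤ b.length + 1) :
      withBoundary (n + t.getD 0 0) (t ++ [n]) k = withBoundary n t k :=
    withBoundary_append_singleton _ _ _ hk0 (by omega)
  intro i hi
  rw [length_addLeft] at hi
  rcases Nat.lt_or_ge i b.length with hib | hib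
  · have hrec := h i hib
    rw [hagree (k := i + 1) (by omega) (by omega), hagree (k := i + 2) (by omega) (by omega)]
    rcases Nat.eq_zero_or_pos i with rfl | hi0
    · rw [withBoundary_succ_of_lt _ _ (by omega) 0, withBoundary_zero] at hrec ⊢
      rw [addLeft_getD_zero hb]
      push_cast
      linear_combination hrec
    · rwa [addLeft_getD_of_pos hi0.ne' hib, hagree hi0.ne' (by omega)]
  · obtain rfl : i = b.length := by omega
    have hlast : withBoundary n t b.length = t.getD (t.length - 1) 0 := by
      rw [show b.length = t.length - 1 + 1 by omega, withBoundary_succ_of_lt _ _ (by omega) 0]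
    have hend : withBoundary (n + t.getD 0 0) (t ++ [n]) (b.length + 2) = n + t.getD 0 0 := by
      simpa [hlen] using withBoundary_length_succ (n + t.getD 0 0) (t ++ [n])
    rw [addLeft_getD_length, hagree (by omega) le_rfl, hagree (by omega) (by omega), hlast, hend,
      ← hlen, withBoundary_length_succ]
    linear_combination -hsum

theorem IsDiscrepancyVector.addLeft {b : List ℤ} {t : List ℚ} {n : ℚ} (hn : 0 < n)
    (hb : ∀ x ∈ b, 2 ≤ x) (hlen : t.length = b.length)
    (h : IsDiscrepancyVector b (t.map fun x => -1 + x / n))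
    (hsum : t.getD 0 0 + t.getD (t.length - 1) 0 = n) :
    IsDiscrepancyVector (addLeft b)
      (t.map (fun x => -1 + x / (n + t.getD 0 0)) ++
        [-1 + (t.getD 0 0 + t.getD (t.length - 1) 0) / (n + t.getD 0 0)]) := by
  have hr : 0 < t.length := length_pos_of_getD_add_getD_ne_zero (hsum ▸ hn.ne')
  have hbne : b ≠ [] := List.length_pos_iff.mp (hlen ▸ hr)
  rw [isDiscrepancyVector_map_iff_solvesChain hn.ne' hlen] at h
  have ht0 : 0 < t.getD 0 0 := by
    have := h.pos hb (by simpa using hn) (by simpa [← hlen] using hn) (k := 1) (by omega)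
    rwa [withBoundary_succ_of_lt _ _ hr 0] at this
  rw [hsum, ← List.map_singleton (f := fun x => -1 + x / (n + t.getD 0 0)), ← List.map_append,
    isDiscrepancyVector_map_iff_solvesChain (by positivity) (by simp [hlen])]
  exact h.addLeft hbne hlen hsum

theorem IsDiscrepancyVector.addRight {b : List ℤ} {t : List ℚ} {n : ℚ} (hn : 0 < n)
    (hb : ∀ x ∈ b, 2 ≤ x) (hlen : t.length = b.length)
    (h : IsDiscrepancyVector b (t.map fun x => -1 + x / n))
    (hsum : t.getD 0 0 + t.getD (t.length - 1) 0 = n) :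
    IsDiscrepancyVector (addRight b)
      ((-1 + (t.getD 0 0 + t.getD (t.length - 1) 0) / (n + t.getD (t.length - 1) 0)) ::
        t.map (fun x => -1 + x / (n + t.getD (t.length - 1) 0))) := by
  have hr : 0 < t.length := length_pos_of_getD_add_getD_ne_zero (hsum ▸ hn.ne')
  have hhead : t.reverse.getD 0 0 = t.getD (t.length - 1) 0 := by
    rw [List.getD_reverse _ hr, Nat.sub_zero]
  have hlast : t.reverse.getD (t.reverse.length - 1) 0 = t.getD 0 0 := by
    rw [List.length_reverse, List.getD_reverse _ (by omega)]
    congr 1; omega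
  have hrev : IsDiscrepancyVector b.reverse (t.reverse.map fun x => -1 + x / n) := by
    rw [List.map_reverse]; exact h.reverse
  have := (hrev.addLeft hn (by simpa using hb) (by simpa using hlen)
    (by rw [hhead, hlast, add_comm, hsum])).reverse
  rwa [← addRight_eq_reverse_addLeft_reverse, List.reverse_append, hhead, hlast,
    add_comm (t.getD (t.length - 1) 0), ← List.map_reverse, List.reverse_reverse] at this

theorem stmt5_general (n a : ℤ) (ha : 0 < a) (han : a < n)
    (b : List ℤ) (h2 : ∀ x ∈ b, 2 ≤ x)
    (t : List ℤ) (hlen : t.length = b.length)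
    (hδ : IsDiscrepancyVector b (t.map fun ti => -1 + (ti : ℚ) / (n : ℚ)))
    (hsum : t.getD 0 0 + t.getD (t.length - 1) 0 = n) :
    IsDiscrepancyVector (addLeft b)
        ((t.map fun ti => -1 + (ti : ℚ) / ((n : ℚ) + (t.getD 0 0 : ℚ))) ++
          [-1 + ((t.getD 0 0 : ℚ) + (t.getD (t.length - 1) 0 : ℚ)) /
            ((n : ℚ) + (t.getD 0 0 : ℚ))]) ∧
      IsDiscrepancyVector (addRight b)
        ((-1 + ((t.getD 0 0 : ℚ) + (t.getD (t.length - 1) 0 : ℚ)) /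
            ((n : ℚ) + (t.getD (t.length - 1) 0 : ℚ))) ::
          t.map fun ti => -1 + (ti : ℚ) / ((n : ℚ) + (t.getD (t.length - 1) 0 : ℚ))) := by
  -- `t.map` above acts on the coercion `(↑t : List ℚ)`, which unfolds to `t.map Int.cast`
  simp only [bind_pure_comp, List.map_eq_map] at hδ ⊢
  have hn : (0 : ℚ) < n := by exact_mod_cast ha.trans han
  have hget (i : ℕ) : (t.map (Int.cast : ℤ → ℚ)).getD i 0 = t.getD i 0 := by
    simpa using List.getD_map t 0 (Int.cast : ℤ → ℚ) (n := i)
  have hlenQ : (t.map (Int.cast : ℤ → ℚ)).length = b.length := by rw [List.length_map, hlen]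
  have hsumQ : (t.map (Int.cast : ℤ → ℚ)).getD 0 0 +
      (t.map (Int.cast : ℤ → ℚ)).getD ((t.map (Int.cast : ℤ → ℚ)).length - 1) 0 = n := by
    rw [hget, hget, List.length_map]; exact_mod_cast hsum
  have hleft := hδ.addLeft hn h2 hlenQ hsumQ
  have hright := hδ.addRight hn h2 hlenQ hsumQ
  simp only [hget, List.length_map] at hleft hright
  exact ⟨hleft, hright⟩

theorem stmt5 (d n a : ℤ) (hd : 1 ≤ d) (ha : 0 < a) (han : a < n)
    (hgcd : Int.gcd a n = 1)
    (b : List ℤ) (h2 : ∀ x ∈ b, 2 ≤ x)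
    (hcf : hjcfZ b = ((d * n ^ 2 : ℤ) : ℚ) / ((d * n * a - 1 : ℤ) : ℚ))
    (t : List ℤ) (hlen : t.length = b.length)
    (hδ : IsDiscrepancyVector b (t.map fun ti => -1 + (ti : ℚ) / (n : ℚ)))
    (hsum : t.getD 0 0 + t.getD (t.length - 1) 0 = n) :
    IsDiscrepancyVector (addLeft b)
        ((t.map fun ti => -1 + (ti : ℚ) / ((n : ℚ) + (t.getD 0 0 : ℚ))) ++
          [-1 + ((t.getD 0 0 : ℚ) + (t.getD (t.length - 1) 0 : ℚ)) /
            ((n : ℚ) + (t.getD 0 0 : ℚ))]) ∧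
      IsDiscrepancyVector (addRight b)
        ((-1 + ((t.getD 0 0 : ℚ) + (t.getD (t.length - 1) 0 : ℚ)) /
            ((n : ℚ) + (t.getD (t.length - 1) 0 : ℚ))) ::
          t.map fun ti => -1 + (ti : ℚ) / ((n : ℚ) + (t.getD (t.length - 1) 0 : ℚ))) :=
  stmt5_general n a ha han b h2 t hlen hδ hsum
end

section
/- Let (b_1,…,b_r) be a T-chain with r ≥ 2 and let (δ_1,…,δ_r) be a discrepancy vector for it. If b_r = 2 then δ_r > −1/2, and if b_1 = 2 then δ_1 > −1/2. (In words: the discrepancy at an ending (−2)-curve of a T-chain is strictly greater than −1/2.) -/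
def seqQ (β : ℕ → ℚ) (x y : ℚ) : ℕ → ℚ
  | 0 => x
  | 1 => y
  | (n+2) => β n * seqQ β x y (n+1) - seqQ β x y n

lemma core (r : ℕ) (hr : 2 ≤ r) (β : ℕ → ℚ) (hβ : ∀ j, j < r → (2:ℚ) ≤ β j)
    (hβ0 : β 0 = 2) (e : ℕ → ℚ) (he0 : e 0 = 1) (heR : e (r+1) = 1)
    (herec : ∀ i, 1 ≤ i → i ≤ r → e (i+1) = β (i-1) * e i - e (i-1)) :
    1/2 < e 1 := by
  set F : ℕ → ℚ := seqQ β 0 1 with hF_def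
  set G : ℕ → ℚ := seqQ β (-1) 0 with hG_def
  set Hs : ℕ → ℚ := seqQ (fun k => β (k+1)) (-1) 0 with hHs_def
  have hF0 : F 0 = 0 := rfl
  have hF1 : F 1 = 1 := rfl
  have hG0 : G 0 = -1 := rfl
  have hG1 : G 1 = 0 := rfl
  have hH0 : Hs 0 = -1 := rfl
  have hH1 : Hs 1 = 0 := rfl
  have recF : ∀ n, F (n+2) = β n * F (n+1) - F n := fun n => rfl
  have recG : ∀ n, G (n+2) = β n * G (n+1) - G n := fun n => rfl
  have recH : ∀ n, Hs (n+2) = β (n+1) * Hs (n+1) - Hs n := fun n => rfl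
  clear_value F G Hs
  -- Claim A: solve the recursion forward
  have hA : ∀ i, i ≤ r → e i = e 1 * F i - G i ∧ e (i+1) = e 1 * F (i+1) - G (i+1) := by
    intro i
    induction i with
    | zero =>
      exact fun _ => ⟨by rw [he0, hF0, hG0]; ring, by rw [hF1, hG1]; ring⟩
    | succ i ih =>
      intro hi
      obtain ⟨h1, h2⟩ := ih (by omega)
      refine ⟨h2, ?_⟩
      have hrec := herec (i+1) (by omega) (by omega)
      simp only [Nat.add_sub_cancel] at hrec
      have hf : F (i+1+1) = β i * F (i+1) - F i := recF i
      have hg : G (i+1+1) = β i * G (i+1) - G i := recG i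
      linear_combination hrec + β i * h2 - h1 - e 1 * hf + hg
  -- Claim B: the front recurrence for continuants
  have hB : ∀ i, F (i+1) = β 0 * G (i+1) - Hs i ∧ F (i+2) = β 0 * G (i+2) - Hs (i+1) := by
    intro i
    induction i with
    | zero =>
      constructor
      · rw [hF1, hG1, hH0]; ring
      · rw [recF 0, recG 0, hF0, hF1, hG0, hG1, hH1]; ring
    | succ i ih =>
      obtain ⟨h1, h2⟩ := ih
      refine ⟨h2, ?_⟩
      have hf : F (i+1+2) = β (i+1) * F (i+1+1) - F (i+1) := recF (i+1)
      have hg : G (i+1+2) = β (i+1) * G (i+1+1) - G (i+1) := recG (i+1)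
      have hh : Hs (i+1+1) = β (i+1) * Hs (i+1) - Hs i := recH i
      have h2' : F (i+1+1) = β 0 * G (i+1+1) - Hs (i+1) := h2
      linear_combination hf - β 0 * hg + hh + β (i+1) * h2' - h1
  -- F is nonnegative and increasing
  have hF : ∀ i, i ≤ r → 0 ≤ F i ∧ F i + 1 ≤ F (i+1) := by
    intro i
    induction i with
    | zero => exact fun _ => ⟨by rw [hF0], by rw [hF0, hF1]; norm_num⟩
    | succ i ih =>
      intro hi
      obtain ⟨h1, h2⟩ := ih (by omega)
      have hb := hβ i (by omega)
      have hf : F (i+1+1) = β i * F (i+1) - F i := recF i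
      refine ⟨by linarith, ?_⟩
      rw [hf]
      nlinarith [h1, h2, hb]
  -- G is nonnegative and increasing (from index 1)
  have hG : ∀ i, i + 1 ≤ r → 0 ≤ G (i+1) ∧ G (i+1) ≤ G (i+2) := by
    intro i
    induction i with
    | zero =>
      intro _
      refine ⟨by rw [hG1], ?_⟩
      rw [hG1, recG 0, hG0, hG1]; norm_num
    | succ i ih =>
      intro hi
      obtain ⟨h1, h2⟩ := ih (by omega)
      have hb := hβ (i+1) (by omega)
      have hg : G (i+1+2) = β (i+1) * G (i+1+1) - G (i+1) := recG (i+1)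
      have h2' : G (i+1) ≤ G (i+1+1) := h2
      refine ⟨by linarith, ?_⟩
      rw [hg]
      nlinarith [h1, h2', hb]
  -- Hs is nonnegative and increasing (from index 1)
  have hH : ∀ i, i + 2 ≤ r → 0 ≤ Hs (i+1) ∧ Hs (i+1) ≤ Hs (i+2) := by
    intro i
    induction i with
    | zero =>
      intro _
      refine ⟨by rw [hH1], ?_⟩
      rw [hH1, recH 0, hH0, hH1]; norm_num
    | succ i ih =>
      intro hi
      obtain ⟨h1, h2⟩ := ih (by omega)
      have hb := hβ (i+2) (by omega)
      have hh : Hs (i+1+2) = β (i+2) * Hs (i+1+1) - Hs (i+1) := recH (i+1)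
      have h2' : Hs (i+1) ≤ Hs (i+1+1) := h2
      refine ⟨by linarith, ?_⟩
      rw [hh]
      nlinarith [h1, h2', hb]
  -- conclude
  have hAr := (hA r le_rfl).2
  rw [heR] at hAr
  have hBr := (hB r).1
  rw [hβ0] at hBr
  obtain ⟨hFr0, hFr1⟩ := hF r le_rfl
  have hGr : 0 ≤ G (r+1) := by
    obtain ⟨g1, g2⟩ := hG (r-1) (by omega)
    have e1 : r - 1 + 1 = r := by omega
    have e2 : r - 1 + 2 = r + 1 := by omega
    rw [e1] at g1; rw [e1, e2] at g2
    linarith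
  have hHr : 0 ≤ Hs r := by
    obtain ⟨g1, g2⟩ := hH (r-2) (by omega)
    have e2 : r - 2 + 2 = r := by omega
    rw [e2] at g2
    linarith
  nlinarith [hAr, hBr, hFr0, hFr1, hGr, hHr]


/-- `b` is a T-chain. -/
def IsTChain (b : List ℤ) : Prop :=
  (∀ x ∈ b, 2 ≤ x) ∧
    ∃ d n a : ℤ, 1 ≤ d ∧ 0 < a ∧ a < n ∧ Int.gcd a n = 1 ∧
      hjcfZ b = ((d * n ^ 2 : ℤ) : ℚ) / ((d * n * a - 1 : ℤ) : ℚ)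

theorem stmt6 (b : List ℤ) (hT : IsTChain b) (hr : 2 ≤ b.length)
    (δ : List ℚ) (hδ : IsDiscrepancyVector b δ) :
    (b.getD (b.length - 1) 0 = 2 → -(1 / 2 : ℚ) < δ.getD (b.length - 1) 0) ∧
      (b.getD 0 0 = 2 → -(1 / 2 : ℚ) < δ.getD 0 0) := by
  obtain ⟨hlen, heq⟩ := hδ
  set r := b.length with hr_def
  have hmem : ∀ j, j < r → (2:ℚ) ≤ ((b.getD j 0 : ℤ) : ℚ) := by
    intro j hj
    have : b.getD j 0 ∈ b := by
      rw [List.getD_eq_getElem b 0 hj]; exact List.getElem_mem hj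
    exact_mod_cast hT.1 _ this
  have hout : ∀ j, r ≤ j → δ.getD j 0 = 0 := by
    intro j hj
    exact List.getD_eq_default _ _ (by omega)
  constructor
  · -- last entry
    intro hb
    set β : ℕ → ℚ := fun j => ((b.getD (r-1-j) 0 : ℤ) : ℚ) with hβ_def
    set e : ℕ → ℚ := fun i => if i = 0 ∨ r+1 ≤ i then 1 else δ.getD (r - i) 0 + 1 with he_def
    have key : 1/2 < e 1 := by
      apply core r hr β
      · intro j hj
        exact hmem _ (by omega)
      · show ((b.getD (r-1-0) 0 : ℤ) : ℚ) = 2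
        rw [show r - 1 - 0 = r - 1 from rfl, hb]; norm_num
      · simp [he_def]
      · simp [he_def]
      · intro i h1 h2
        have hβi : β (i-1) = ((b.getD (r-i) 0 : ℤ) : ℚ) := by
          simp only [hβ_def]; congr 2; omega
        have ei : e i = δ.getD (r-i) 0 + 1 := by
          simp only [he_def]
          rw [if_neg (by rintro (h | h) <;> omega)]
        rw [ei, hβi]
        rcases eq_or_ne i r with hir | hir
        · subst hir
          have hd := heq 0 (by omega)
          rw [if_pos rfl, show (0:ℕ)+1 = 1 from rfl] at hd
          have eip : e (r+1) = 1 := by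
            simp only [he_def]; rw [if_pos (by omega)]
          have eim : e (r-1) = δ.getD 1 0 + 1 := by
            simp only [he_def]
            rw [if_neg (by rintro (h | h) <;> omega), show r - (r-1) = 1 by omega]
          rw [eip, eim, show r - r = 0 by omega]
          linarith [hd]
        · have hd := heq (r-i) (by omega)
          rw [if_neg (by omega : ¬ (r - i = 0))] at hd
          have eip : e (i+1) = δ.getD (r-i-1) 0 + 1 := by
            simp only [he_def]
            rw [if_neg (by rintro (h | h) <;> omega), show r - (i+1) = r - i - 1 by omega]
          rw [eip]
          rcases eq_or_ne i 1 with h1' | h1'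
          · subst h1'
            have hz : δ.getD (r - 1 + 1) 0 = 0 := hout _ (by omega)
            rw [hz] at hd
            have eim : e (1-1) = 1 := by simp [he_def]
            rw [eim]
            linarith [hd]
          · have eim : e (i-1) = δ.getD (r-i+1) 0 + 1 := by
              simp only [he_def]
              rw [if_neg (by rintro (h | h) <;> omega), show r - (i-1) = r - i + 1 by omega]
            rw [eim]
            linarith [hd]
    have he1 : e 1 = δ.getD (r-1) 0 + 1 := by
      simp only [he_def]
      rw [if_neg (by rintro (h | h) <;> omega)]
    rw [he1] at key
    linarith
  · -- first entry
    intro hb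
    set β : ℕ → ℚ := fun j => ((b.getD j 0 : ℤ) : ℚ) with hβ_def
    set e : ℕ → ℚ := fun i => if i = 0 then 1 else δ.getD (i-1) 0 + 1 with he_def
    have key : 1/2 < e 1 := by
      apply core r hr β hmem
      · show ((b.getD 0 0 : ℤ) : ℚ) = 2
        rw [hb]; norm_num
      · simp [he_def]
      · simp only [he_def]
        rw [if_neg (by omega : ¬ (r+1 = 0)), Nat.add_sub_cancel, hout r le_rfl]
        norm_num
      · intro i h1 h2
        have hd := heq (i-1) (by omega)
        rw [show i - 1 + 1 = i from by omega] at hd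
        have eip : e (i+1) = δ.getD i 0 + 1 := by
          simp only [he_def, Nat.add_sub_cancel]
          rw [if_neg (by omega : ¬ (i+1 = 0))]
        have ei : e i = δ.getD (i-1) 0 + 1 := by
          simp only [he_def]
          rw [if_neg (by omega : ¬ (i = 0))]
        have hβi : β (i-1) = ((b.getD (i-1) 0 : ℤ) : ℚ) := by simp only [hβ_def]
        rw [eip, ei, hβi]
        rcases eq_or_ne i 1 with h1' | h1'
        · subst h1'
          norm_num at hd ⊢
          have eim : e 0 = 1 := by simp [he_def]
          rw [eim]
          linarith [hd]
        · rw [if_neg (by omega : ¬ (i - 1 = 0))] at hd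
          have eim : e (i-1) = δ.getD (i-1-1) 0 + 1 := by
            simp only [he_def]
            rw [if_neg (by omega : ¬ (i - 1 = 0))]
          rw [eim]
          linarith [hd]
    have he1 : e 1 = δ.getD 0 0 + 1 := by
      simp [he_def]
    rw [he1] at key
    linarith
end

section
/- Let G be a finite tree on a vertex set V with |V| = p, let a : V → ℝ assign a nonnegative real number to each vertex, and let z assign a nonnegative real number to each edge of G. Assume that for every edge e = {u,v} of G one has a(u) ≥ z(e) and a(v) ≥ z(e). Then (p−1) · Σ_{v ∈ V} a(v) ≥ p · Σ_{e ∈ E(G)} z(e). -/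
/-!
Root the tree at a vertex `r` where `a` is largest. Sending every other vertex `w` to the edge
joining it to a neighbour closer to `r` is injective, hence, as a tree has `p - 1` edges, a
bijection onto them; and `z` of that edge is at most `a w`. So `∑ z ≤ ∑ a - a r`, while `∑ a ≤ p · a r`.
-/

open Finset

namespace SimpleGraph

variable {V : Type*} {G : SimpleGraph V}

lemma Connected.exists_adj_dist_lt (hG : G.Connected) {w r : V} (hw : w ≠ r) :
    ∃ v, G.Adj w v ∧ G.dist v r < G.dist w r := by
  obtain ⟨p, hp⟩ := hG.exists_walk_length_eq_dist w r
  cases p with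
  | nil => exact absurd rfl hw
  | cons hadj q =>
    refine ⟨_, hadj, ?_⟩
    rw [← hp, Walk.length_cons]
    exact Nat.lt_succ_of_le (dist_le q)

/-- Two vertices sharing their edge would each be closer to `r` than the other. -/
lemma Connected.exists_injOn_edge_toward (hG : G.Connected) (r : V) :
    ∃ f : V → V, (∀ w ≠ r, G.Adj w (f w)) ∧ Set.InjOn (fun w ↦ s(w, f w)) {r}ᶜ := by
  classical
  choose! f hadj hlt using fun w (hw : w ≠ r) ↦ hG.exists_adj_dist_lt hw
  refine ⟨f, hadj, fun w hw w' hw' heq ↦ ?_⟩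
  rcases Sym2.eq_iff.mp heq with ⟨h, -⟩ | ⟨hw'f, hwf⟩
  · exact h
  · have h₁ := hlt w hw
    have h₂ := hlt w' hw'
    rw [hwf] at h₁
    rw [← hw'f] at h₂
    omega

lemma IsTree.sum_edgeFinset_le_sum_compl [Fintype V] [DecidableEq V] [DecidableRel G.Adj]
    {M : Type*} [AddCommMonoid M] [PartialOrder M] [IsOrderedAddMonoid M]
    (hG : G.IsTree) (r : V) (a : V → M) (z : Sym2 V → M)
    (haz : ∀ u v : V, G.Adj u v → z s(u, v) ≤ a u) :
    ∑ e ∈ G.edgeFinset, z e ≤ ∑ w ∈ {r}ᶜ, a w := by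
  obtain ⟨f, hadj, hinj⟩ := hG.connected.exists_injOn_edge_toward r
  have hinj' : Set.InjOn (fun w ↦ s(w, f w)) (({r}ᶜ : Finset V) : Set V) := by
    simpa using hinj
  have himage : ({r}ᶜ : Finset V).image (fun w ↦ s(w, f w)) = G.edgeFinset := by
    refine eq_of_subset_of_card_le (fun e he ↦ ?_) ?_
    · obtain ⟨w, hw, rfl⟩ := mem_image.mp he
      exact mem_edgeFinset.mpr (hadj w (by simpa using hw))
    · have := hG.card_edgeFinset
      rw [card_image_of_injOn hinj', card_compl, card_singleton]
      omega
  rw [← himage, sum_image hinj']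
  exact sum_le_sum fun w hw ↦ haz w (f w) (hadj w (by simpa using hw))

end SimpleGraph

theorem stmt12_general {V : Type*} [Fintype V] [DecidableEq V]
    (G : SimpleGraph V) [DecidableRel G.Adj] (hG : G.IsTree)
    (a : V → ℝ) (z : Sym2 V → ℝ)
    (haz : ∀ u v : V, G.Adj u v → z s(u, v) ≤ a u) :
    ((Fintype.card V : ℝ) - 1) * ∑ v : V, a v ≥
      (Fintype.card V : ℝ) * ∑ e ∈ G.edgeFinset, z e := by
  have := hG.connected.nonempty
  obtain ⟨r, -, hr⟩ := exists_max_image univ a univ_nonempty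
  have hedges : ∑ e ∈ G.edgeFinset, z e ≤ ∑ v, a v - a r := by
    rw [← sum_compl_add_sum {r} a, sum_singleton, add_sub_cancel_right]
    exact hG.sum_edgeFinset_le_sum_compl r a z haz
  have hmax : ∑ v, a v ≤ Fintype.card V * a r := by
    simpa using sum_le_card_nsmul univ a (a r) fun v _ ↦ hr v (mem_univ v)
  have hcard : (0 : ℝ) ≤ Fintype.card V := Nat.cast_nonneg _
  linarith [mul_le_mul_of_nonneg_left hedges hcard]

theorem stmt12 {V : Type*} [Fintype V] [DecidableEq V]
    (G : SimpleGraph V) [DecidableRel G.Adj] (hG : G.IsTree)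
    (a : V → ℝ) (z : Sym2 V → ℝ)
    (ha : ∀ v : V, 0 ≤ a v) (hz : ∀ e ∈ G.edgeSet, 0 ≤ z e)
    (haz : ∀ u v : V, G.Adj u v → z s(u, v) ≤ a u) :
    ((Fintype.card V : ℝ) - 1) * ∑ v : V, a v ≥
      (Fintype.card V : ℝ) * ∑ e ∈ G.edgeFinset, z e :=
  stmt12_general G hG a z haz
end
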